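/- Let E be a normed space, L ≥ 1 an integer, F_0 = 1 and F_1,…,F_L positive integers. For each layer ℓ = 1,…,L let σ_ℓ : E → E be Lipschitz with constant C_ℓ and σ_ℓ(0) = 0, and let A_ℓ^{fg}, Ã_ℓ^{fg} : E → E (for 1 ≤ f ≤ F_ℓ, 1 ≤ g ≤ F_{ℓ−1}) be bounded linear operators with ‖A_ℓ^{fg}‖ ≤ B_ℓ, ‖Ã_ℓ^{fg}‖ ≤ B_ℓ, and ‖A_ℓ^{fg} − Ã_ℓ^{fg}‖ ≤ Δ_ℓ for all f, g. Given an input x ∈ E, define x_0^1 = x̃_0^1 = x and recursively x_ℓ^f = σ_ℓ(∑_{g=1}^{F_{ℓ−1}} A_ℓ^{fg} x_{ℓ−1}^g) and x̃_ℓ^f = σ_ℓ(∑_{g=1}^{F_{ℓ−1}} Ã_ℓ^{fg} x̃_{ℓ−1}^g). Then the network outputs satisfy (∑_{f=1}^{F_L} ‖x_L^f − x̃_L^f‖²)^{1/2} ≤ √(F_L) · (∑_{ℓ=1}^L Δ_ℓ (∏_{r=ℓ}^L C_r)(∏_{r=ℓ+1}^L B_r)(∏_{r=ℓ}^{L−1}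 F_r)(∏_{r=1}^{ℓ−1} C_r F_r B_r)) ‖x‖. -/

import Mathlib

/-!
Induction on the depth. Perturbing a layer changes each output feature by at most
`C_ℓ F_{ℓ-1} (B_ℓ D_{ℓ-1} + Δ_ℓ P_{ℓ-1})`, where `D_{ℓ-1}` bounds the feature differences
and `P_{ℓ-1}` the features of the perturbed network one layer down; the features themselves
grow by at most `C_ℓ F_{ℓ-1} B_ℓ` per layer. Unrolling this linear recursion gives the sum in
the bound, and the ℓ² norm of `F_L` features each at most `D_L` is at most `√F_L · D_L`.
-/

open Finset

section SumApply

variable {𝕜 ι E E' : Type*} [NontriviallyNormedField 𝕜]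
  [SeminormedAddCommGroup E] [NormedSpace 𝕜 E] [SeminormedAddCommGroup E'] [NormedSpace 𝕜 E']
  {s : Finset ι} {A A' : ι → E →L[𝕜] E'} {u v : ι → E} {B Δ D P : ℝ}

theorem norm_sum_apply_le (hA : ∀ g ∈ s, ‖A g‖ ≤ B) (hv : ∀ g ∈ s, ‖v g‖ ≤ P) :
    ‖∑ g ∈ s, A g (v g)‖ ≤ #s * (B * P) := by
  refine (norm_sum_le _ _).trans ?_
  rw [← nsmul_eq_mul]
  exact sum_le_card_nsmul _ _ _ fun g hg => (A g).le_of_opNorm_le_of_le (hA g hg) (hv g hg)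

theorem norm_sum_apply_sub_sum_apply_le (hA : ∀ g ∈ s, ‖A g‖ ≤ B)
    (hΔ : ∀ g ∈ s, ‖A g - A' g‖ ≤ Δ) (huv : ∀ g ∈ s, ‖u g - v g‖ ≤ D)
    (hv : ∀ g ∈ s, ‖v g‖ ≤ P) :
    ‖∑ g ∈ s, A g (u g) - ∑ g ∈ s, A' g (v g)‖ ≤ #s * (B * D + Δ * P) := by
  have hsplit : ∑ g ∈ s, A g (u g) - ∑ g ∈ s, A' g (v g)
      = ∑ g ∈ s, A g (u g - v g) + ∑ g ∈ s, (A g - A' g) (v g) := by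
    simp only [map_sub, sub_apply, sum_sub_distrib]
    abel
  rw [hsplit, mul_add]
  exact (norm_add_le _ _).trans
    (add_le_add (norm_sum_apply_le hA huv) (norm_sum_apply_le hΔ hv))

end SumApply

theorem sqrt_sum_norm_sq_le_sqrt_card_mul {ι E : Type*} [SeminormedAddCommGroup E]
    {s : Finset ι} {d : ι → E} {c : ℝ} (hd : ∀ i ∈ s, ‖d i‖ ≤ c) :
    Real.sqrt (∑ i ∈ s, ‖d i‖ ^ 2) ≤ Real.sqrt #s * c := by
  obtain rfl | ⟨i, hi⟩ := s.eq_empty_or_nonempty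
  · simp
  have hc : 0 ≤ c := (norm_nonneg _).trans (hd i hi)
  have hsum : ∑ i ∈ s, ‖d i‖ ^ 2 ≤ #s * c ^ 2 := by
    rw [← nsmul_eq_mul]
    exact sum_le_card_nsmul _ _ _ fun j hj => pow_le_pow_left₀ (norm_nonneg _) (hd j hj) 2
  calc Real.sqrt (∑ i ∈ s, ‖d i‖ ^ 2) ≤ Real.sqrt (#s * c ^ 2) := Real.sqrt_le_sqrt hsum
    _ = Real.sqrt #s * c := by rw [Real.sqrt_mul (Nat.cast_nonneg _), Real.sqrt_sq hc]

namespace AlgNN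

section Layer

variable {𝕜 ι E E' G : Type*} [NontriviallyNormedField 𝕜]
  [SeminormedAddCommGroup E] [NormedSpace 𝕜 E] [SeminormedAddCommGroup E'] [NormedSpace 𝕜 E']
  [SeminormedAddCommGroup G] {s : Finset ι} {A A' : ι → E →L[𝕜] E'} {u v : ι → E}
  {σ : E' → G} {B Δ C D P : ℝ}

theorem norm_layer_le (hC : 0 ≤ C) (hσ : ∀ a b, ‖σ a - σ b‖ ≤ C * ‖a - b‖) (hσ0 : σ 0 = 0)
    (hA : ∀ g ∈ s, ‖A g‖ ≤ B) (hv : ∀ g ∈ s, ‖v g‖ ≤ P) :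
    ‖σ (∑ g ∈ s, A g (v g))‖ ≤ C * (#s * (B * P)) := by
  calc ‖σ (∑ g ∈ s, A g (v g))‖ = ‖σ (∑ g ∈ s, A g (v g)) - σ 0‖ := by rw [hσ0, sub_zero]
    _ ≤ C * ‖∑ g ∈ s, A g (v g)‖ := by simpa using hσ _ 0
    _ ≤ C * (#s * (B * P)) := mul_le_mul_of_nonneg_left (norm_sum_apply_le hA hv) hC

theorem norm_layer_sub_layer_le (hC : 0 ≤ C) (hσ : ∀ a b, ‖σ a - σ b‖ ≤ C * ‖a - b‖)
    (hA : ∀ g ∈ s, ‖A g‖ ≤ B) (hΔ : ∀ g ∈ s, ‖A g - A' g‖ ≤ Δ)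
    (huv : ∀ g ∈ s, ‖u g - v g‖ ≤ D) (hv : ∀ g ∈ s, ‖v g‖ ≤ P) :
    ‖σ (∑ g ∈ s, A g (u g)) - σ (∑ g ∈ s, A' g (v g))‖ ≤ C * (#s * (B * D + Δ * P)) :=
  (hσ _ _).trans
    (mul_le_mul_of_nonneg_left (norm_sum_apply_sub_sum_apply_le hA hΔ huv hv) hC)

end Layer

section Bounds

variable (F : ℕ → ℕ) (C B Δ : ℕ → ℝ)

/-- Bound, in units of `‖x‖`, on each feature at depth `ℓ` of a network with filters of norm at
most `B`. -/
def featureNormBound : ℕ → ℝ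
  | 0 => 1
  | ℓ + 1 => C (ℓ + 1) * (F ℓ * (B (ℓ + 1) * featureNormBound ℓ))

def stabilityConstant (L : ℕ) : ℝ :=
  ∑ ℓ ∈ Icc 1 L, Δ ℓ * (∏ r ∈ Icc ℓ L, C r) * (∏ r ∈ Icc (ℓ + 1) L, B r)
    * (∏ r ∈ Icc ℓ (L - 1), (F r : ℝ)) * (∏ r ∈ Icc 1 (ℓ - 1), C r * (F r : ℝ) * B r)

variable {F} in
theorem natCast_mul_featureNormBound (hF0 : F 0 = 1) (ℓ : ℕ) :
    F ℓ * featureNormBound F C B ℓ = ∏ r ∈ Icc 1 ℓ, C r * (F r : ℝ) * B r := by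
  induction ℓ with
  | zero => simp [featureNormBound, hF0]
  | succ ℓ ih =>
    rw [prod_Icc_succ_top (by omega), ← ih, featureNormBound]
    ring

theorem stabilityConstant_zero : stabilityConstant F C B Δ 0 = 0 := by
  simp [stabilityConstant]

theorem stabilityConstant_succ (L : ℕ) :
    stabilityConstant F C B Δ (L + 1) = C (L + 1) * (F L * B (L + 1) * stabilityConstant F C B Δ L
      + Δ (L + 1) * ∏ r ∈ Icc 1 L, C r * (F r : ℝ) * B r) := by
  rw [stabilityConstant, stabilityConstant, sum_Icc_succ_top (by omega), mul_add, mul_sum,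
    mul_sum]
  congr 1
  · refine sum_congr rfl fun ℓ hℓ => ?_
    obtain ⟨hℓ1, hℓL⟩ := mem_Icc.1 hℓ
    obtain ⟨k, rfl⟩ : ∃ k, L = k + 1 := ⟨L - 1, by omega⟩
    rw [prod_Icc_succ_top (by omega : ℓ ≤ k + 1 + 1) C,
      prod_Icc_succ_top (by omega : ℓ + 1 ≤ k + 1 + 1) B]
    simp only [Nat.add_sub_cancel]
    rw [prod_Icc_succ_top hℓL fun r => (F r : ℝ)]
    ring
  · rw [Icc_self, prod_singleton, Icc_eq_empty_of_lt (by omega), Icc_eq_empty_of_lt (by omega),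
      prod_empty, prod_empty, Nat.add_sub_cancel]
    ring

end Bounds

section Network

variable {E : Type*} [NormedAddCommGroup E] [NormedSpace ℝ E] {L : ℕ} {F : ℕ → ℕ}
  {σ : ℕ → E → E} {A A' : ℕ → ℕ → ℕ → E →L[ℝ] E} {C B Δ : ℕ → ℝ} {x : E} {xs ys : ℕ → ℕ → E}

theorem norm_feature_le (hF0 : F 0 = 1) (hC : ∀ ℓ ∈ Icc 1 L, 0 ≤ C ℓ)
    (hσ : ∀ ℓ ∈ Icc 1 L, ∀ a b : E, ‖σ ℓ a - σ ℓ b‖ ≤ C ℓ * ‖a - b‖)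
    (hσ0 : ∀ ℓ ∈ Icc 1 L, σ ℓ 0 = 0)
    (hA : ∀ ℓ ∈ Icc 1 L, ∀ f ∈ Icc 1 (F ℓ), ∀ g ∈ Icc 1 (F (ℓ - 1)), ‖A ℓ f g‖ ≤ B ℓ)
    (hx0 : xs 0 1 = x)
    (hxs : ∀ ℓ < L, ∀ f ∈ Icc 1 (F (ℓ + 1)),
      xs (ℓ + 1) f = σ (ℓ + 1) (∑ g ∈ Icc 1 (F ℓ), A (ℓ + 1) f g (xs ℓ g))) :
    ∀ ℓ ≤ L, ∀ f ∈ Icc 1 (F ℓ), ‖xs ℓ f‖ ≤ featureNormBound F C B ℓ * ‖x‖ := by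
  intro ℓ
  induction ℓ with
  | zero =>
    intro _ f hf
    obtain rfl : f = 1 := by simpa [hF0] using hf
    simp [featureNormBound, hx0]
  | succ ℓ ih =>
    intro hℓ f hf
    have hmem : ℓ + 1 ∈ Icc 1 L := mem_Icc.2 ⟨by omega, hℓ⟩
    rw [hxs ℓ hℓ f hf]
    refine (norm_layer_le (hC _ hmem) (hσ _ hmem) (hσ0 _ hmem) (by simpa using hA _ hmem f hf)
      fun g hg => ih (by omega) g hg).trans_eq ?_
    rw [Nat.card_Icc, Nat.add_sub_cancel, featureNormBound]
    ring

theorem norm_sub_feature_le (hF0 : F 0 = 1) (hC : ∀ ℓ ∈ Icc 1 L, 0 ≤ C ℓ)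
    (hσ : ∀ ℓ ∈ Icc 1 L, ∀ a b : E, ‖σ ℓ a - σ ℓ b‖ ≤ C ℓ * ‖a - b‖)
    (hσ0 : ∀ ℓ ∈ Icc 1 L, σ ℓ 0 = 0)
    (hA : ∀ ℓ ∈ Icc 1 L, ∀ f ∈ Icc 1 (F ℓ), ∀ g ∈ Icc 1 (F (ℓ - 1)), ‖A ℓ f g‖ ≤ B ℓ)
    (hA' : ∀ ℓ ∈ Icc 1 L, ∀ f ∈ Icc 1 (F ℓ), ∀ g ∈ Icc 1 (F (ℓ - 1)), ‖A' ℓ f g‖ ≤ B ℓ)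
    (hΔ : ∀ ℓ ∈ Icc 1 L, ∀ f ∈ Icc 1 (F ℓ), ∀ g ∈ Icc 1 (F (ℓ - 1)),
      ‖A ℓ f g - A' ℓ f g‖ ≤ Δ ℓ)
    (hx0 : xs 0 1 = x) (hy0 : ys 0 1 = x)
    (hxs : ∀ ℓ < L, ∀ f ∈ Icc 1 (F (ℓ + 1)),
      xs (ℓ + 1) f = σ (ℓ + 1) (∑ g ∈ Icc 1 (F ℓ), A (ℓ + 1) f g (xs ℓ g)))
    (hys : ∀ ℓ < L, ∀ f ∈ Icc 1 (F (ℓ + 1)),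
      ys (ℓ + 1) f = σ (ℓ + 1) (∑ g ∈ Icc 1 (F ℓ), A' (ℓ + 1) f g (ys ℓ g))) :
    ∀ ℓ ≤ L, ∀ f ∈ Icc 1 (F ℓ), ‖xs ℓ f - ys ℓ f‖ ≤ stabilityConstant F C B Δ ℓ * ‖x‖ := by
  have hys_le := norm_feature_le hF0 hC hσ hσ0 hA' hy0 hys
  intro ℓ
  induction ℓ with
  | zero =>
    intro _ f hf
    obtain rfl : f = 1 := by simpa [hF0] using hf
    simp [stabilityConstant_zero, hx0, hy0]
  | succ ℓ ih =>
    intro hℓ f hf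
    have hmem : ℓ + 1 ∈ Icc 1 L := mem_Icc.2 ⟨by omega, hℓ⟩
    rw [hxs ℓ hℓ f hf, hys ℓ hℓ f hf]
    refine (norm_layer_sub_layer_le (hC _ hmem) (hσ _ hmem) (by simpa using hA _ hmem f hf)
      (by simpa using hΔ _ hmem f hf) (fun g hg => ih (by omega) g hg)
      fun g hg => hys_le ℓ (by omega) g hg).trans_eq ?_
    rw [Nat.card_Icc, Nat.add_sub_cancel, stabilityConstant_succ,
      ← natCast_mul_featureNormBound C B hF0]
    ring

end Network

end AlgNN

open Finset in
theorem algNN_stability_deep_general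
    {E : Type*} [NormedAddCommGroup E] [NormedSpace ℝ E]
    (L : ℕ)
    (F : ℕ → ℕ) (hF0 : F 0 = 1)
    (σ : ℕ → E → E) (A A' : ℕ → ℕ → ℕ → E →L[ℝ] E) (C B Δ : ℕ → ℝ)
    (hC : ∀ ℓ ∈ Icc 1 L, 0 ≤ C ℓ)
    (hσ : ∀ ℓ ∈ Icc 1 L, ∀ a b : E, ‖σ ℓ a - σ ℓ b‖ ≤ C ℓ * ‖a - b‖)
    (hσ0 : ∀ ℓ ∈ Icc 1 L, σ ℓ 0 = 0)
    (hA : ∀ ℓ ∈ Icc 1 L, ∀ f ∈ Icc 1 (F ℓ), ∀ g ∈ Icc 1 (F (ℓ - 1)),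
      ‖A ℓ f g‖ ≤ B ℓ)
    (hA' : ∀ ℓ ∈ Icc 1 L, ∀ f ∈ Icc 1 (F ℓ), ∀ g ∈ Icc 1 (F (ℓ - 1)),
      ‖A' ℓ f g‖ ≤ B ℓ)
    (hΔ : ∀ ℓ ∈ Icc 1 L, ∀ f ∈ Icc 1 (F ℓ), ∀ g ∈ Icc 1 (F (ℓ - 1)),
      ‖A ℓ f g - A' ℓ f g‖ ≤ Δ ℓ)
    (x : E) (xs ys : ℕ → ℕ → E)
    (hx0 : xs 0 1 = x) (hy0 : ys 0 1 = x)
    (hxs : ∀ ℓ < L, ∀ f ∈ Icc 1 (F (ℓ + 1)),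
      xs (ℓ + 1) f = σ (ℓ + 1) (∑ g ∈ Icc 1 (F ℓ), A (ℓ + 1) f g (xs ℓ g)))
    (hys : ∀ ℓ < L, ∀ f ∈ Icc 1 (F (ℓ + 1)),
      ys (ℓ + 1) f = σ (ℓ + 1) (∑ g ∈ Icc 1 (F ℓ), A' (ℓ + 1) f g (ys ℓ g))) :
    Real.sqrt (∑ f ∈ Icc 1 (F L), ‖xs L f - ys L f‖ ^ 2) ≤
      Real.sqrt (F L) *
        (∑ ℓ ∈ Icc 1 L, Δ ℓ * (∏ r ∈ Icc ℓ L, C r) * (∏ r ∈ Icc (ℓ + 1) L, B r)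
          * (∏ r ∈ Icc ℓ (L - 1), (F r : ℝ))
          * (∏ r ∈ Icc 1 (ℓ - 1), C r * (F r : ℝ) * B r)) * ‖x‖ := by
  have hdiff := AlgNN.norm_sub_feature_le hF0 hC hσ hσ0 hA hA' hΔ hx0 hy0 hxs hys L le_rfl
  refine (sqrt_sum_norm_sq_le_sqrt_card_mul hdiff).trans_eq ?_
  rw [Nat.card_Icc, Nat.add_sub_cancel, AlgNN.stabilityConstant, mul_assoc]

open Finset in
/-- **Per-feature stability of deep algebraic neural networks with multiple
features.**  Layer `ℓ` maps the `F (ℓ-1)` input features to `F ℓ` output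
features; each output feature is the `C ℓ`-Lipschitz nonlinearity `σ ℓ`
(vanishing at `0`) applied to a sum over input features of filtered signals,
with filters `A ℓ f g` (perturbed `A' ℓ f g`) satisfying `‖A ℓ f g‖ ≤ B ℓ`,
`‖A' ℓ f g‖ ≤ B ℓ` and `‖A ℓ f g - A' ℓ f g‖ ≤ Δ ℓ`.  Then the distance
between the tuples of `F L` output features of the network and of its perturbed
version, measured in the ℓ²-norm over features, satisfies the stated bound. -/
theorem algNN_stability_deep
    {E : Type*} [NormedAddCommGroup E] [NormedSpace ℝ E]
    (L : ℕ) (hL : 1 ≤ L)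
    (F : ℕ → ℕ) (hF0 : F 0 = 1) (hFpos : ∀ ℓ ∈ Icc 1 L, 0 < F ℓ)
    (σ : ℕ → E → E) (A A' : ℕ → ℕ → ℕ → E →L[ℝ] E) (C B Δ : ℕ → ℝ)
    (hC : ∀ ℓ ∈ Icc 1 L, 0 ≤ C ℓ)
    (hσ : ∀ ℓ ∈ Icc 1 L, ∀ a b : E, ‖σ ℓ a - σ ℓ b‖ ≤ C ℓ * ‖a - b‖)
    (hσ0 : ∀ ℓ ∈ Icc 1 L, σ ℓ 0 = 0)
    (hA : ∀ ℓ ∈ Icc 1 L, ∀ f ∈ Icc 1 (F ℓ), ∀ g ∈ Icc 1 (F (ℓ - 1)),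
      ‖A ℓ f g‖ ≤ B ℓ)
    (hA' : ∀ ℓ ∈ Icc 1 L, ∀ f ∈ Icc 1 (F ℓ), ∀ g ∈ Icc 1 (F (ℓ - 1)),
      ‖A' ℓ f g‖ ≤ B ℓ)
    (hΔ : ∀ ℓ ∈ Icc 1 L, ∀ f ∈ Icc 1 (F ℓ), ∀ g ∈ Icc 1 (F (ℓ - 1)),
      ‖A ℓ f g - A' ℓ f g‖ ≤ Δ ℓ)
    (x : E) (xs ys : ℕ → ℕ → E)
    (hx0 : xs 0 1 = x) (hy0 : ys 0 1 = x)
    (hxs : ∀ ℓ < L, ∀ f ∈ Icc 1 (F (ℓ + 1)),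
      xs (ℓ + 1) f = σ (ℓ + 1) (∑ g ∈ Icc 1 (F ℓ), A (ℓ + 1) f g (xs ℓ g)))
    (hys : ∀ ℓ < L, ∀ f ∈ Icc 1 (F (ℓ + 1)),
      ys (ℓ + 1) f = σ (ℓ + 1) (∑ g ∈ Icc 1 (F ℓ), A' (ℓ + 1) f g (ys ℓ g))) :
    Real.sqrt (∑ f ∈ Icc 1 (F L), ‖xs L f - ys L f‖ ^ 2) ≤
      Real.sqrt (F L) *
        (∑ ℓ ∈ Icc 1 L, Δ ℓ * (∏ r ∈ Icc ℓ L, C r) * (∏ r ∈ Icc (ℓ + 1) L, B r)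
          * (∏ r ∈ Icc ℓ (L - 1), (F r : ℝ))
          * (∏ r ∈ Icc 1 (ℓ - 1), C r * (F r : ℝ) * B r)) * ‖x‖ :=
  algNN_stability_deep_general L F hF0 σ A A' C B Δ hC hσ hσ0 hA hA' hΔ x xs ys hx0 hy0 hxs hys
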